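/- arXiv:hep-th/9912239 — 3 statements merged into one kernel-verified Lean document; each statement's English description precedes it below -/
import Mathlib

section
/- Let H be a finite-dimensional real symplectic vector space with symplectic form ω, and let σ : H → H be a linear involution satisfying ω(σx, σy) = -ω(x, y) for all x, y. If λ₁, λ₂, λ₃ are Lagrangian subspaces of H each invariant under σ, then the Maslov index μ(λ₁, λ₂, λ₃) equals 0. -/
open QuadraticMap

open Module

section MaslovHelpers

variable {n : ℕ}

/-- Submodule of functions supported on `{i | P i}`. -/
def suppSubmodule (P : Fin n → Prop) [DecidablePred P] : Submodule ℝ (Fin n → ℝ) where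
  carrier := {x | ∀ i, ¬ P i → x i = 0}
  add_mem' := by intro a b ha hb i hi; simp [ha i hi, hb i hi]
  zero_mem' := by intro i _; rfl
  smul_mem' := by intro c x hx i hi; simp [hx i hi]

lemma mem_suppSubmodule {P : Fin n → Prop} [DecidablePred P] {x : Fin n → ℝ} :
    x ∈ suppSubmodule P ↔ ∀ i, ¬ P i → x i = 0 := Iff.rfl

noncomputable def suppEquiv (P : Fin n → Prop) [DecidablePred P] :
    suppSubmodule P ≃ₗ[ℝ] ({i // P i} → ℝ) where
  toFun x := fun i => x.1 i.1
  map_add' := by intro a b; rfl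
  map_smul' := by intro c x; rfl
  invFun y := ⟨fun i => if h : P i then y ⟨i, h⟩ else 0, fun i hi => dif_neg hi⟩
  left_inv := by
    rintro ⟨x, hx⟩
    ext i
    by_cases h : P i
    · simp [h]
    · simp [h, hx i h]
  right_inv := by intro y; ext i; exact dif_pos i.prop

lemma finrank_suppSubmodule (P : Fin n → Prop) [DecidablePred P] :
    finrank ℝ (suppSubmodule P) = (Finset.univ.filter fun i => P i).card := by
  rw [(suppEquiv P).finrank_eq, Module.finrank_pi, Fintype.card_subtype]

lemma sum_sq_pos (w x : Fin n → ℝ) (h : ∀ i, x i ≠ 0 → 0 < w i) (hx : x ≠ 0) :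
    0 < ∑ i, w i * (x i * x i) := by
  obtain ⟨j, hj⟩ : ∃ j, x j ≠ 0 := by
    by_contra hc
    push_neg at hc
    exact hx (funext hc)
  apply Finset.sum_pos' _ ⟨j, Finset.mem_univ j, mul_pos (h j hj) (mul_self_pos.2 hj)⟩
  intro i _
  by_cases hxi : x i = 0
  · simp [hxi]
  · exact le_of_lt (mul_pos (h i hxi) (mul_self_pos.2 hxi))

lemma sum_sq_nonpos (w x : Fin n → ℝ) (h : ∀ i, x i ≠ 0 → w i ≤ 0) :
    ∑ i, w i * (x i * x i) ≤ 0 := by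
  apply Finset.sum_nonpos
  intro i _
  by_cases hxi : x i = 0
  · simp [hxi]
  · exact mul_nonpos_of_nonpos_of_nonneg (h i hxi) (mul_self_nonneg _)

lemma dim_ineq {V : Type*} [AddCommGroup V] [Module ℝ V] [FiniteDimensional ℝ V]
    (f : V → ℝ) (P N : Submodule ℝ V)
    (hP : ∀ x ∈ P, x ≠ 0 → 0 < f x) (hN : ∀ x ∈ N, f x ≤ 0) :
    finrank ℝ P + finrank ℝ N ≤ finrank ℝ V := by
  have hdisj : P ⊓ N = ⊥ := by
    rw [eq_bot_iff]
    intro x hx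
    rcases hx with ⟨hxP, hxN⟩
    by_contra hne
    have h1 := hP x hxP (by simpa using hne)
    have h2 := hN x hxN
    linarith
  have key := Submodule.finrank_sup_add_finrank_inf_eq P N
  rw [hdisj, finrank_bot, add_zero] at key
  rw [← key]
  exact Submodule.finrank_le _

end MaslovHelpers

/-- A subspace of a symplectic vector space is Lagrangian if it is isotropic and
coisotropic, i.e. it coincides with its symplectic orthogonal complement. -/
def IsLagrangian {V : Type*} [AddCommGroup V] [Module ℝ V]
    (ω : V →ₗ[ℝ] V →ₗ[ℝ] ℝ) (L : Submodule ℝ V) : Prop :=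
  (∀ x ∈ L, ∀ y ∈ L, ω x y = 0) ∧ (∀ x : V, (∀ y ∈ L, ω x y = 0) → x ∈ L)

/-- **Vanishing of the Maslov index for symmetric Lagrangians.**
Let `(H, ω)` be a finite-dimensional real symplectic vector space and `σ` a linear
involution with `ω (σ x) (σ y) = - ω x y`.  If `λ₁, λ₂, λ₃` are Lagrangian subspaces
invariant under `σ`, then the Maslov index `μ(λ₁, λ₂, λ₃)`, i.e. the signature of the
quadratic form `Q x = ω x₂ x` on `(λ₁ + λ₂) ∩ λ₃` (where `x = x₁ + x₂`, `xᵢ ∈ λᵢ`),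
vanishes: any diagonalization of `Q` has as many positive as negative coefficients. -/
theorem maslov_index_zero_of_symmetric_lagrangians
    {H : Type*} [AddCommGroup H] [Module ℝ H] [FiniteDimensional ℝ H]
    (ω : H →ₗ[ℝ] H →ₗ[ℝ] ℝ)
    (hskew : ∀ x y : H, ω x y = - ω y x)
    (hnondeg : ∀ x : H, (∀ y : H, ω x y = 0) → x = 0)
    (σ : H →ₗ[ℝ] H) (hσinv : σ.comp σ = LinearMap.id)
    (hσω : ∀ x y : H, ω (σ x) (σ y) = - ω x y)
    (l₁ l₂ l₃ : Submodule ℝ H)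
    (h₁ : IsLagrangian ω l₁) (h₂ : IsLagrangian ω l₂) (h₃ : IsLagrangian ω l₃)
    (hσ₁ : ∀ x ∈ l₁, σ x ∈ l₁) (hσ₂ : ∀ x ∈ l₂, σ x ∈ l₂) (hσ₃ : ∀ x ∈ l₃, σ x ∈ l₃)
    (Q : QuadraticForm ℝ ((l₁ ⊔ l₂) ⊓ l₃ : Submodule ℝ H))
    (hQ : ∀ (x : ((l₁ ⊔ l₂) ⊓ l₃ : Submodule ℝ H)) (x₁ x₂ : H),
      x₁ ∈ l₁ → x₂ ∈ l₂ → (x : H) = x₁ + x₂ → Q x = ω x₂ (x : H)) :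
    ∀ (n : ℕ) (w : Fin n → ℝ), Q.Equivalent (weightedSumSquares ℝ w) →
      (Finset.univ.filter fun i => 0 < w i).card
        = (Finset.univ.filter fun i => w i < 0).card := by
  classical
  intro n w hequiv
  set W := weightedSumSquares ℝ w with hWdef
  obtain ⟨f⟩ := hequiv
  -- σ maps D to D
  have hmem : ∀ x ∈ (l₁ ⊔ l₂) ⊓ l₃, σ x ∈ (l₁ ⊔ l₂) ⊓ l₃ := by
    rintro x ⟨hx12, hx3⟩
    refine ⟨?_, hσ₃ x hx3⟩
    obtain ⟨a, ha, b, hb, rfl⟩ := Submodule.mem_sup.1 hx12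
    rw [map_add]
    exact Submodule.add_mem_sup (hσ₁ a ha) (hσ₂ b hb)
  set τ : ((l₁ ⊔ l₂) ⊓ l₃ : Submodule ℝ H) →ₗ[ℝ] ((l₁ ⊔ l₂) ⊓ l₃ : Submodule ℝ H) :=
    σ.restrict hmem with hτ
  have hττ : ∀ x, τ (τ x) = x := by
    intro x
    apply Subtype.ext
    have : σ (σ (x : H)) = (x : H) := by
      simpa using LinearMap.ext_iff.1 hσinv (x : H)
    simpa [hτ, LinearMap.restrict_apply] using this
  set e : ((l₁ ⊔ l₂) ⊓ l₃ : Submodule ℝ H) ≃ₗ[ℝ] ((l₁ ⊔ l₂) ⊓ l₃ : Submodule ℝ H) :=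
    LinearEquiv.ofLinear τ τ (LinearMap.ext fun x => by simpa using hττ x)
      (LinearMap.ext fun x => by simpa using hττ x) with he
  have hecoe : ∀ x, ((e x : ((l₁ ⊔ l₂) ⊓ l₃ : Submodule ℝ H)) : H) = σ (x : H) := by
    intro x; rfl
  have hQe : ∀ x, Q (e x) = - Q x := by
    intro x
    obtain ⟨hx12, hx3⟩ := x.2
    obtain ⟨a, ha, b, hb, hab⟩ := Submodule.mem_sup.1 hx12
    have hx : (x : H) = a + b := hab.symm
    have h1 : Q x = ω b (x : H) := hQ x a b ha hb hx
    have h2 : Q (e x) = ω (σ b) ((e x : ((l₁ ⊔ l₂) ⊓ l₃ : Submodule ℝ H)) : H) :=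
      hQ (e x) (σ a) (σ b) (hσ₁ a ha) (hσ₂ b hb) (by rw [hecoe, hx, map_add])
    rw [h1, h2, hecoe, hσω]
  set F := f.toLinearEquiv with hF
  set g : (Fin n → ℝ) ≃ₗ[ℝ] (Fin n → ℝ) := F.symm.trans (e.trans F) with hgdef
  have hFf : ∀ m, F m = f m := fun _ => rfl
  have hWapp : ∀ x, W x = ∑ i, w i * (x i * x i) := by
    intro x
    rw [hWdef, weightedSumSquares_apply]
    simp [smul_eq_mul]
  have hg : ∀ y, W (g y) = - W y := by
    intro y
    have h1 : W (F (e (F.symm y))) = Q (e (F.symm y)) := by rw [hFf]; exact f.map_app _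
    have h2 : W (F (F.symm y)) = Q (F.symm y) := by rw [hFf]; exact f.map_app _
    rw [F.apply_symm_apply] at h2
    have hgy : g y = F (e (F.symm y)) := rfl
    rw [hgy, h1, hQe, ← h2]
  -- submodules
  set p := (Finset.univ.filter fun i => 0 < w i).card with hp
  set q := (Finset.univ.filter fun i => w i < 0).card with hq
  have hfin : finrank ℝ (Fin n → ℝ) = n := Module.finrank_fin_fun ℝ
  have hcardp := Finset.card_filter_add_card_filter_not
    (s := (Finset.univ : Finset (Fin n))) (p := fun i => 0 < w i)
  have hcardq := Finset.card_filter_add_card_filter_not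
    (s := (Finset.univ : Finset (Fin n))) (p := fun i => w i < 0)
  rw [Finset.card_univ, Fintype.card_fin] at hcardp hcardq
  -- inequality 1 : q ≤ p
  have ineq1 : finrank ℝ ((suppSubmodule (fun i => w i < 0)).map (g : (Fin n → ℝ) →ₗ[ℝ] (Fin n → ℝ)))
      + finrank ℝ (suppSubmodule (fun i => ¬ 0 < w i)) ≤ finrank ℝ (Fin n → ℝ) := by
    apply dim_ineq W
    · intro y hy hy0
      obtain ⟨x, hx, rfl⟩ := Submodule.mem_map.1 hy
      have hx0 : x ≠ 0 := by
        rintro rfl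
        exact hy0 (map_zero _)
      have hsgn : ∀ i, x i ≠ 0 → 0 < - w i := by
        intro i hxi
        have := mem_suppSubmodule.1 hx i
        by_contra hc
        exact hxi (this (by intro hlt; exact hc (by linarith)))
      have hpos : 0 < ∑ i, (-w i) * (x i * x i) := sum_sq_pos _ x hsgn hx0
      have hsum : ∑ i, (-w i) * (x i * x i) = - ∑ i, w i * (x i * x i) := by
        simp [neg_mul]
      rw [hsum] at hpos
      have hGx : W ((g : (Fin n → ℝ) →ₗ[ℝ] (Fin n → ℝ)) x) = - W x := hg x
      rw [hGx, hWapp]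
      linarith
    · intro x hx
      rw [hWapp]
      apply sum_sq_nonpos
      intro i hxi
      have := mem_suppSubmodule.1 hx i
      by_contra hc
      push_neg at hc
      exact hxi (this (by intro hlt; linarith))
  -- inequality 2 : p ≤ q
  have ineq2 : finrank ℝ (suppSubmodule (fun i => 0 < w i))
      + finrank ℝ ((suppSubmodule (fun i => ¬ w i < 0)).map (g : (Fin n → ℝ) →ₗ[ℝ] (Fin n → ℝ)))
      ≤ finrank ℝ (Fin n → ℝ) := by
    apply dim_ineq W
    · intro x hx hx0
      have hsgn : ∀ i, x i ≠ 0 → 0 < w i := by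
        intro i hxi
        have := mem_suppSubmodule.1 hx i
        by_contra hc
        exact hxi (this hc)
      rw [hWapp]
      exact sum_sq_pos _ x hsgn hx0
    · intro y hy
      obtain ⟨x, hx, rfl⟩ := Submodule.mem_map.1 hy
      have hsgn : ∀ i, x i ≠ 0 → 0 ≤ w i := by
        intro i hxi
        have := mem_suppSubmodule.1 hx i
        by_contra hc
        push_neg at hc
        exact hxi (this (by intro hlt; linarith))
      have hnn : 0 ≤ ∑ i, w i * (x i * x i) := by
        have := sum_sq_nonpos (fun i => - w i) x (fun i hxi => by
          have := hsgn i hxi; simp; linarith)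
        have hsum : ∑ i, (-w i) * (x i * x i) = - ∑ i, w i * (x i * x i) := by
          simp [neg_mul]
        rw [hsum] at this
        linarith
      have hGx : W ((g : (Fin n → ℝ) →ₗ[ℝ] (Fin n → ℝ)) x) = - W x := hg x
      rw [hGx, hWapp]
      linarith
  rw [LinearEquiv.finrank_map_eq, finrank_suppSubmodule, finrank_suppSubmodule, ← hq, hfin]
    at ineq1
  rw [LinearEquiv.finrank_map_eq, finrank_suppSubmodule, finrank_suppSubmodule, ← hp, hfin]
    at ineq2
  omega
end

section
/- In a ribbon category with simple tensor unit, if V is a simple self-dual object and ν(V) is the scalar defined by (θ_{V*} ⊗ id_V) ∘ c_{V,V*} ∘ b_V = ν(V) · (φ⁻¹ ⊗ φ) ∘ b_V for an isomorphism φ : V* → V, then ν(V)² = 1. -/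
open CategoryTheory CategoryTheory.MonoidalCategory

universe v u

/-- A ribbon category: a braided rigid monoidal category equipped with a natural
twist `θ` satisfying `θ_{V⊗W} = c_{W,V} ∘ c_{V,W} ∘ (θ_V ⊗ θ_W)` and compatible with
duality: `(θ_V ⊗ id_{V*}) ∘ b_V = (id_V ⊗ θ_{V*}) ∘ b_V`. -/
class RibbonCategory (C : Type u) [Category.{v} C] [MonoidalCategory C]
    [BraidedCategory C] [RightRigidCategory C] where
  twist : ∀ V : C, V ≅ V
  twist_naturality : ∀ {V W : C} (f : V ⟶ W), f ≫ (twist W).hom = (twist V).hom ≫ f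
  twist_tensor : ∀ V W : C,
    (twist (V ⊗ W)).hom = ((twist V).hom ⊗ₘ (twist W).hom) ≫ (β_ V W).hom ≫ (β_ W V).hom
  twist_dual : ∀ V : C,
    η_ V Vᘁ ≫ ((twist V).hom ⊗ₘ 𝟙 Vᘁ) = η_ V Vᘁ ≫ (𝟙 V ⊗ₘ (twist Vᘁ).hom)

/-! Rotating a morphism `f : 𝟙 ⟶ X ⊗ Y` to `f ≫ c_{X,Y} ≫ (θ_Y ▷ X) : 𝟙 ⟶ Y ⊗ X` twice gives
`f ≫ θ_{X⊗Y} = θ_𝟙 ≫ f = f`, since `θ_𝟙` is an idempotent isomorphism. By the defining relation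
of `ν`, rotating `b_V` multiplies it by `ν` up to transport along `φ`; rotating twice therefore
gives `ν² • b_V = b_V`, and `b_V ≠ 0` by the zig-zag identity since `V ≠ 0`. -/

namespace RibbonCategory

variable {C : Type u} [Category.{v} C] [MonoidalCategory C] [BraidedCategory C]
  [RightRigidCategory C] [RibbonCategory C]

theorem twist_tensorUnit : (twist (𝟙_ C)).hom = 𝟙 (𝟙_ C) := by
  have hβ : (β_ (𝟙_ C) (𝟙_ C)).hom = 𝟙 _ := by
    rw [braiding_tensorUnit_left, unitors_equal, Iso.hom_inv_id]
  have hidem : (twist (𝟙_ C)).hom ≫ (twist (𝟙_ C)).hom = (twist (𝟙_ C)).hom := by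
    have h := twist_naturality (λ_ (𝟙_ C)).hom
    rw [twist_tensor, hβ, MonoidalCategory.tensorHom_def] at h
    simpa [unitors_equal, unitors_inv_equal] using h.symm
  rwa [← cancel_mono (twist (𝟙_ C)).hom, Category.id_comp]

theorem twist_tensor' (X Y : C) :
    (twist (X ⊗ Y)).hom = (β_ X Y).hom ≫ (β_ Y X).hom ≫ ((twist X).hom ⊗ₘ (twist Y).hom) := by
  rw [twist_tensor, BraidedCategory.braiding_naturality_assoc,
    BraidedCategory.braiding_naturality]

def rotate {X Y : C} (f : 𝟙_ C ⟶ X ⊗ Y) : 𝟙_ C ⟶ Y ⊗ X :=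
  f ≫ (β_ X Y).hom ≫ ((twist Y).hom ▷ X)

theorem rotate_rotate {X Y : C} (f : 𝟙_ C ⟶ X ⊗ Y) : rotate (rotate f) = f :=
  calc rotate (rotate f)
      = f ≫ (twist (X ⊗ Y)).hom := by
        simp [rotate, twist_tensor', MonoidalCategory.tensorHom_def', whisker_exchange]
    _ = f := by rw [twist_naturality, twist_tensorUnit, Category.id_comp]

theorem rotate_comp_tensorHom {X X' Y Y' : C} (f : 𝟙_ C ⟶ X ⊗ Y) (g : X ⟶ X') (h : Y ⟶ Y') :
    rotate (f ≫ (g ⊗ₘ h)) = rotate f ≫ (h ⊗ₘ g) := by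
  simp only [rotate, Category.assoc, BraidedCategory.braiding_naturality_assoc, ← tensorHom_id,
    tensorHom_comp_tensorHom, twist_naturality, Category.id_comp, Category.comp_id]

theorem rotate_smul {k : Type*} [Semiring k] [Preadditive C] [Linear k C] {X Y : C}
    (c : k) (f : 𝟙_ C ⟶ X ⊗ Y) : rotate (c • f) = c • rotate f :=
  Linear.smul_comp _ _ _ _ _ _

end RibbonCategory

theorem coevaluation_ne_zero {C : Type u} [Category.{v} C] [MonoidalCategory C] [Preadditive C]
    [MonoidalPreadditive C] {X Y : C} [ExactPairing X Y] (hX : 𝟙 X ≠ 0) : η_ X Y ≠ 0 := by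
  intro hη
  apply hX
  have zigzag := ExactPairing.evaluation_coevaluation X Y
  rw [hη, MonoidalPreadditive.zero_whiskerRight, Limits.zero_comp] at zigzag
  simpa using congrArg (fun f ↦ (λ_ X).inv ≫ f ≫ (ρ_ X).hom) zigzag.symm

theorem frobeniusSchur_sq_eq_one_general {k : Type*} [Field k]
    {C : Type u} [Category.{v} C] [MonoidalCategory C] [BraidedCategory C]
    [RightRigidCategory C] [Preadditive C] [Linear k C]
    [MonoidalPreadditive C] [RibbonCategory C]
    (V : C)
    (hVnontriv : (𝟙 V : V ⟶ V) ≠ 0)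
    (φ : Vᘁ ≅ V) (ν : k)
    (hν : η_ V Vᘁ ≫ (β_ V Vᘁ).hom ≫ ((RibbonCategory.twist Vᘁ).hom ⊗ₘ 𝟙 V)
        = ν • (η_ V Vᘁ ≫ (φ.inv ⊗ₘ φ.hom))) :
    ν ^ 2 = 1 := by
  have hrotate : RibbonCategory.rotate (η_ V Vᘁ) = ν • (η_ V Vᘁ ≫ (φ.inv ⊗ₘ φ.hom)) := by
    rwa [RibbonCategory.rotate, ← tensorHom_id]
  have hsq : (ν ^ 2) • η_ V Vᘁ = (1 : k) • η_ V Vᘁ :=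
    calc (ν ^ 2) • η_ V Vᘁ
        = ν • ((ν • (η_ V Vᘁ ≫ (φ.inv ⊗ₘ φ.hom))) ≫ (φ.hom ⊗ₘ φ.inv)) := by
          rw [Linear.smul_comp, smul_smul, Category.assoc, tensorHom_comp_tensorHom, Iso.inv_hom_id,
            Iso.hom_inv_id, id_tensorHom_id, Category.comp_id, sq]
      _ = RibbonCategory.rotate (RibbonCategory.rotate (η_ V Vᘁ)) := by
          rw [hrotate, RibbonCategory.rotate_smul, RibbonCategory.rotate_comp_tensorHom, hrotate]
      _ = (1 : k) • η_ V Vᘁ := by rw [RibbonCategory.rotate_rotate, one_smul]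
  exact smul_left_injective k (coevaluation_ne_zero hVnontriv) hsq

/-- **The Frobenius–Schur indicator squares to one.**
In a `k`-linear ribbon category with simple tensor unit, if `V` is a simple self-dual
object (with self-duality witnessed by the isomorphism `φ : V* ≅ V`), and `ν` is the
scalar with `(θ_{V*} ⊗ id_V) ∘ c_{V,V*} ∘ b_V = ν • (φ⁻¹ ⊗ φ) ∘ b_V`, then `ν ^ 2 = 1`. -/
theorem frobeniusSchur_sq_eq_one {k : Type*} [Field k]
    {C : Type u} [Category.{v} C] [MonoidalCategory C] [BraidedCategory C]
    [RightRigidCategory C] [Preadditive C] [Linear k C]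
    [MonoidalPreadditive C] [MonoidalLinear k C] [RibbonCategory C]
    (hunit : ∀ f : (𝟙_ C) ⟶ 𝟙_ C, ∃ a : k, f = a • 𝟙 (𝟙_ C))
    (V : C)
    (hsimple : ∀ f : V ⟶ V, ∃ a : k, f = a • 𝟙 V)
    (hVnontriv : (𝟙 V : V ⟶ V) ≠ 0)
    (φ : Vᘁ ≅ V) (ν : k)
    (hν : η_ V Vᘁ ≫ (β_ V Vᘁ).hom ≫ ((RibbonCategory.twist Vᘁ).hom ⊗ₘ 𝟙 V)
        = ν • (η_ V Vᘁ ≫ (φ.inv ⊗ₘ φ.hom))) :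
    ν ^ 2 = 1 :=
  frobeniusSchur_sq_eq_one_general V hVnontriv φ ν hν
end

section
/- For each nonzero integer n, the map i_n : S³ \ L → (S³ \ L)/ℤ_{|n|} given by (u, v) ↦ (v/|v|)^{-1/n} · (u, |v|) is a well-defined homeomorphism with inverse (u, v) ↦ (u v⁻¹ |v|, v^{-n} |v|^{n+1}), where L = {(z, 0) : |z| = 1} ⊂ S³ ⊂ ℂ² and ℤ_{|n|} acts on S³ by (u, v) ↦ (ζu, ζv) with ζ = exp(2πi/|n|). -/
open Complex

/-- The complement `S³ \ L` of the unknot `L = {(z,0) : |z| = 1}` in the unit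
3-sphere `S³ = {(u,v) ∈ ℂ² : |u|² + |v|² = 1}`. -/
def SphereMinusL : Type :=
  {p : ℂ × ℂ // ‖p.1‖ ^ 2 + ‖p.2‖ ^ 2 = 1 ∧ p.2 ≠ 0}

noncomputable instance : TopologicalSpace SphereMinusL :=
  instTopologicalSpaceSubtype

/-- The orbit relation of the `ℤ/|n|` action `(u,v) ↦ (ζu, ζv)`, `ζ = exp(2πi/|n|)`,
on `S³ \ L`. -/
def orbitRel (n : ℤ) (p q : SphereMinusL) : Prop :=
  ∃ k : ℤ, (q.1 : ℂ × ℂ) =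
    (Complex.exp (2 * Real.pi * I / (|n| : ℤ)) ^ k * p.1.1,
     Complex.exp (2 * Real.pi * I / (|n| : ℤ)) ^ k * p.1.2)

/-! The phase `v/|v|` is unwound by an `n`-th root `w` of its inverse; two such roots differ by a
power of `ζ = exp(2πi/|n|)`, so the class of `(w u, w |v|)` does not depend on the choice, and
the inverse formula is invariant under multiplication by `ζ` because `ζ ^ n = 1`. Continuity of
the forward map comes from a root of the phase that is continuous near any given point, obtained
from the principal logarithm of the phase relative to its value at that point. -/

noncomputable section

theorem SphereMinusL.ext {p q : SphereMinusL} (h₁ : p.1.1 = q.1.1) (h₂ : p.1.2 = q.1.2) :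
    p = q :=
  Subtype.ext (Prod.ext h₁ h₂)

namespace LensSpace

theorem norm_eq_one_of_zpow_eq {𝕜 : Type*} [NormedDivisionRing 𝕜] {n : ℤ} (hn : n ≠ 0)
    {w z : 𝕜} (h : w ^ n = z) (hz : ‖z‖ = 1) : ‖w‖ = 1 := by
  by_contra hw
  exact hn ((zpow_eq_one_iff_right₀ (norm_nonneg w) hw).1 (by rw [← norm_zpow, h, hz]))

theorem exp_log_div_zpow {n : ℤ} (hn : n ≠ 0) {z : ℂ} (hz : z ≠ 0) :
    exp (log z / n) ^ n = z := by
  rw [← exp_int_mul, mul_div_cancel₀ _ (Int.cast_ne_zero.2 hn), exp_log hz]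

theorem exists_continuousAt_zpow_eq {X : Type*} [TopologicalSpace X] {c : X → ℂ} {x₀ : X}
    (hc : ContinuousAt c x₀) (hc0 : ∀ x, c x ≠ 0) {n : ℤ} (hn : n ≠ 0) :
    ∃ w : X → ℂ, ContinuousAt w x₀ ∧ ∀ x, w x ^ n = c x := by
  refine ⟨fun x => exp (log (c x₀) / n) * exp (log (c x / c x₀) / n), ?_, fun x => ?_⟩
  · have hlog : ContinuousAt (fun x => log (c x / c x₀)) x₀ := by
      refine (hc.div_const _).clog ?_
      rw [div_self (hc0 x₀)]
      exact one_mem_slitPlane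
    exact continuousAt_const.mul (continuous_exp.continuousAt.comp (hlog.div_const _))
  · rw [mul_zpow, exp_log_div_zpow hn (hc0 x₀),
      exp_log_div_zpow hn (div_ne_zero (hc0 x) (hc0 x₀)), mul_div_cancel₀ _ (hc0 x₀)]

def zeta (n : ℤ) : ℂ := exp (2 * Real.pi * I / (|n| : ℤ))

theorem isPrimitiveRoot_zeta {n : ℤ} (hn : n ≠ 0) : IsPrimitiveRoot (zeta n) n.natAbs := by
  rw [zeta, Int.abs_eq_natAbs, Int.cast_natCast]
  exact isPrimitiveRoot_exp _ (Int.natAbs_ne_zero.2 hn)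

theorem norm_zeta_zpow {n : ℤ} (hn : n ≠ 0) (k : ℤ) : ‖zeta n ^ k‖ = 1 := by
  rw [norm_zpow, (isPrimitiveRoot_zeta hn).norm'_eq_one (Int.natAbs_ne_zero.2 hn), one_zpow]

theorem zeta_zpow_zpow_self {n : ℤ} (hn : n ≠ 0) (k : ℤ) : (zeta n ^ k) ^ n = 1 := by
  rw [← zpow_mul, mul_comm, zpow_mul, (isPrimitiveRoot_zeta hn).zpow_eq_one_iff_dvd n |>.2
    (Int.natCast_dvd.2 dvd_rfl), one_zpow]

theorem exists_eq_zeta_zpow_mul_of_zpow_eq {n : ℤ} (hn : n ≠ 0) {w w' : ℂ} (hw' : w' ≠ 0)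
    (h : w ^ n = w' ^ n) : ∃ k : ℤ, w = zeta n ^ k * w' := by
  have : NeZero n.natAbs := ⟨Int.natAbs_ne_zero.2 hn⟩
  have hquot : (w / w') ^ n.natAbs = 1 := by
    rw [← zpow_natCast, ← Int.mul_sign_self, zpow_mul, div_zpow, h,
      div_self (zpow_ne_zero n hw'), one_zpow]
  obtain ⟨i, -, hi⟩ := (isPrimitiveRoot_zeta hn).eq_pow_of_pow_eq_one hquot
  exact ⟨i, by rw [zpow_natCast, hi, div_mul_cancel₀ _ hw']⟩

theorem continuous_fst_val : Continuous fun p : SphereMinusL => p.1.1 :=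
  continuous_fst.comp continuous_subtype_val

theorem continuous_snd_val : Continuous fun p : SphereMinusL => p.1.2 :=
  continuous_snd.comp continuous_subtype_val

theorem continuous_ofReal_norm_snd : Continuous fun p : SphereMinusL => (‖p.1.2‖ : ℂ) :=
  continuous_ofReal.comp continuous_snd_val.norm

theorem ofReal_norm_snd_ne_zero (p : SphereMinusL) : (‖p.1.2‖ : ℂ) ≠ 0 :=
  ofReal_ne_zero.2 (norm_ne_zero_iff.2 p.2.2)

def phase (p : SphereMinusL) : ℂ := (p.1.2 / (‖p.1.2‖ : ℂ))⁻¹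

theorem norm_phase (p : SphereMinusL) : ‖phase p‖ = 1 := by
  rw [phase, norm_inv, norm_div, norm_real, norm_norm, div_self (norm_ne_zero_iff.2 p.2.2),
    inv_one]

theorem phase_ne_zero (p : SphereMinusL) : phase p ≠ 0 :=
  norm_ne_zero_iff.1 (by rw [norm_phase]; exact one_ne_zero)

theorem continuous_phase : Continuous phase :=
  (continuous_snd_val.div continuous_ofReal_norm_snd ofReal_norm_snd_ne_zero).inv₀
    fun p => div_ne_zero p.2.2 (ofReal_norm_snd_ne_zero p)

def twist (p : SphereMinusL) (w : ℂ) (hw : ‖w‖ = 1) : SphereMinusL :=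
  ⟨(w * p.1.1, w * ‖p.1.2‖), by
    simp only [norm_mul, hw, one_mul, norm_real, norm_norm]
    exact ⟨p.2.1,
      mul_ne_zero (ne_zero_of_norm_ne_zero (hw ▸ one_ne_zero)) (ofReal_norm_snd_ne_zero p)⟩⟩

theorem norm_untwist_snd (n : ℤ) (p : SphereMinusL) :
    ‖p.1.2 ^ (-n) * (‖p.1.2‖ : ℂ) ^ (n + 1)‖ = ‖p.1.2‖ := by
  rw [norm_mul, norm_zpow, norm_zpow, norm_real, norm_norm,
    ← zpow_add₀ (norm_ne_zero_iff.2 p.2.2), neg_add_cancel_left, zpow_one]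

def untwist (n : ℤ) (p : SphereMinusL) : SphereMinusL :=
  ⟨(p.1.1 * p.1.2⁻¹ * ‖p.1.2‖, p.1.2 ^ (-n) * (‖p.1.2‖ : ℂ) ^ (n + 1)), by
    have hu : ‖p.1.1 * p.1.2⁻¹ * (‖p.1.2‖ : ℂ)‖ = ‖p.1.1‖ := by
      rw [norm_mul, norm_mul, norm_inv, norm_real, norm_norm,
        inv_mul_cancel_right₀ (norm_ne_zero_iff.2 p.2.2)]
    rw [hu, norm_untwist_snd]
    exact ⟨p.2.1, mul_ne_zero (zpow_ne_zero _ p.2.2) (zpow_ne_zero _ (ofReal_norm_snd_ne_zero p))⟩⟩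

theorem mk_twist_eq_mk_twist {n : ℤ} (hn : n ≠ 0) (p : SphereMinusL) {w w' : ℂ}
    (hw : ‖w‖ = 1) (hw' : ‖w'‖ = 1) (h : w' ^ n = w ^ n) :
    Quot.mk (orbitRel n) (twist p w hw) = Quot.mk (orbitRel n) (twist p w' hw') := by
  obtain ⟨k, rfl⟩ :=
    exists_eq_zeta_zpow_mul_of_zpow_eq hn (ne_zero_of_norm_ne_zero (hw ▸ one_ne_zero)) h
  exact Quot.sound ⟨k, by simp only [twist, zeta, mul_assoc]⟩

theorem untwist_eq_untwist_of_orbitRel {n : ℤ} (hn : n ≠ 0) {p q : SphereMinusL}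
    (h : orbitRel n p q) : untwist n p = untwist n q := by
  obtain ⟨k, hk⟩ := h
  obtain ⟨hu, hv⟩ := Prod.ext_iff.1 hk
  change q.1.1 = zeta n ^ k * p.1.1 at hu
  change q.1.2 = zeta n ^ k * p.1.2 at hv
  have hnorm : ‖q.1.2‖ = ‖p.1.2‖ := by rw [hv, norm_mul, norm_zeta_zpow hn, one_mul]
  have hζ : zeta n ^ k ≠ 0 :=
    ne_zero_of_norm_ne_zero ((norm_zeta_zpow hn k).symm ▸ one_ne_zero)
  refine SphereMinusL.ext ?_ ?_
  · change p.1.1 * p.1.2⁻¹ * (‖p.1.2‖ : ℂ) = q.1.1 * q.1.2⁻¹ * (‖q.1.2‖ : ℂ)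
    rw [hnorm, hu, hv, mul_inv, mul_mul_mul_comm, mul_inv_cancel₀ hζ, one_mul]
  · change p.1.2 ^ (-n) * (‖p.1.2‖ : ℂ) ^ (n + 1) = q.1.2 ^ (-n) * (‖q.1.2‖ : ℂ) ^ (n + 1)
    rw [hnorm, hv, mul_zpow, zpow_neg (zeta n ^ k), zeta_zpow_zpow_self hn, inv_one, one_mul]

theorem untwist_twist {n : ℤ} (p : SphereMinusL) {w : ℂ} (hw : ‖w‖ = 1) (h : w ^ n = phase p) :
    untwist n (twist p w hw) = p := by
  have hw0 : w ≠ 0 := ne_zero_of_norm_ne_zero (hw ▸ one_ne_zero)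
  have hnorm : ‖w * (‖p.1.2‖ : ℂ)‖ = ‖p.1.2‖ := by rw [norm_mul, hw, one_mul, norm_real, norm_norm]
  refine SphereMinusL.ext ?_ ?_
  · change w * p.1.1 * (w * (‖p.1.2‖ : ℂ))⁻¹ * (‖w * (‖p.1.2‖ : ℂ)‖ : ℂ) = p.1.1
    rw [hnorm]
    field_simp [hw0, ofReal_norm_snd_ne_zero p]
  · change (w * (‖p.1.2‖ : ℂ)) ^ (-n) * (‖w * (‖p.1.2‖ : ℂ)‖ : ℂ) ^ (n + 1) = p.1.2
    rw [hnorm, mul_zpow, mul_assoc, ← zpow_add₀ (ofReal_norm_snd_ne_zero p), neg_add_cancel_left,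
      zpow_one, zpow_neg, h, phase, inv_inv, div_mul_cancel₀ _ (ofReal_norm_snd_ne_zero p)]

theorem norm_snd_div_norm (p : SphereMinusL) : ‖p.1.2 / (‖p.1.2‖ : ℂ)‖ = 1 := by
  rw [← inv_inv (_ / _), norm_inv, ← phase, norm_phase, inv_one]

theorem phase_untwist (n : ℤ) (p : SphereMinusL) :
    phase (untwist n p) = (p.1.2 / (‖p.1.2‖ : ℂ)) ^ n := by
  change (p.1.2 ^ (-n) * (‖p.1.2‖ : ℂ) ^ (n + 1) /
    (‖p.1.2 ^ (-n) * (‖p.1.2‖ : ℂ) ^ (n + 1)‖ : ℂ))⁻¹ = _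
  rw [norm_untwist_snd, zpow_add_one₀ (ofReal_norm_snd_ne_zero p), ← mul_assoc,
    mul_div_cancel_right₀ _ (ofReal_norm_snd_ne_zero p), zpow_neg, mul_inv, inv_inv, div_zpow,
    div_eq_mul_inv]

theorem twist_untwist (n : ℤ) (p : SphereMinusL) :
    twist (untwist n p) (p.1.2 / (‖p.1.2‖ : ℂ)) (norm_snd_div_norm p) = p := by
  refine SphereMinusL.ext ?_ ?_
  · change p.1.2 / (‖p.1.2‖ : ℂ) * (p.1.1 * p.1.2⁻¹ * (‖p.1.2‖ : ℂ)) = p.1.1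
    field_simp [p.2.2, ofReal_norm_snd_ne_zero p]
  · change p.1.2 / (‖p.1.2‖ : ℂ) * (‖p.1.2 ^ (-n) * (‖p.1.2‖ : ℂ) ^ (n + 1)‖ : ℂ) = p.1.2
    rw [norm_untwist_snd, div_mul_cancel₀ _ (ofReal_norm_snd_ne_zero p)]

theorem continuous_untwist (n : ℤ) : Continuous (untwist n) :=
  ((continuous_fst_val.mul (continuous_snd_val.inv₀ fun p => p.2.2)).mul
    continuous_ofReal_norm_snd).prodMk
    ((continuous_snd_val.zpow₀ (-n) fun p => Or.inl p.2.2).mul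
      (continuous_ofReal_norm_snd.zpow₀ (n + 1) fun p => Or.inl (ofReal_norm_snd_ne_zero p)))
  |>.subtype_mk _

theorem continuousAt_twist {w : SphereMinusL → ℂ} (hw : ∀ p, ‖w p‖ = 1) {p₀ : SphereMinusL}
    (hw₀ : ContinuousAt w p₀) : ContinuousAt (fun p => twist p (w p) (hw p)) p₀ :=
  Topology.IsInducing.subtypeVal.continuousAt_iff.2 <|
    (hw₀.mul continuous_fst_val.continuousAt).prodMk
      (hw₀.mul continuous_ofReal_norm_snd.continuousAt)

def lensMap {n : ℤ} (hn : n ≠ 0) (p : SphereMinusL) : Quot (orbitRel n) :=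
  Quot.mk _ (twist p _
    (norm_eq_one_of_zpow_eq hn (exp_log_div_zpow hn (phase_ne_zero p)) (norm_phase p)))

theorem lensMap_eq {n : ℤ} (hn : n ≠ 0) (p : SphereMinusL) {w : ℂ} (h : w ^ n = phase p) :
    lensMap hn p = Quot.mk _ (twist p w (norm_eq_one_of_zpow_eq hn h (norm_phase p))) :=
  mk_twist_eq_mk_twist hn p _ _ (by rw [h, exp_log_div_zpow hn (phase_ne_zero p)])

theorem continuous_lensMap {n : ℤ} (hn : n ≠ 0) : Continuous (lensMap hn) := by
  refine continuous_iff_continuousAt.2 fun p₀ => ?_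
  obtain ⟨w, hw_cont, hw⟩ :=
    exists_continuousAt_zpow_eq (continuous_phase.continuousAt (x := p₀)) phase_ne_zero hn
  have hw₁ (p : SphereMinusL) : ‖w p‖ = 1 := norm_eq_one_of_zpow_eq hn (hw p) (norm_phase p)
  have hlocal : lensMap hn = fun p => Quot.mk _ (twist p (w p) (hw₁ p)) :=
    funext fun p => lensMap_eq hn p (hw p)
  rw [hlocal]
  exact continuous_quot_mk.continuousAt.comp (continuousAt_twist hw₁ hw_cont)

def lensHomeomorph {n : ℤ} (hn : n ≠ 0) : SphereMinusL ≃ₜ Quot (orbitRel n) where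
  toFun := lensMap hn
  invFun := Quot.lift (untwist n) fun _ _ => untwist_eq_untwist_of_orbitRel hn
  left_inv p := untwist_twist p _ (exp_log_div_zpow hn (phase_ne_zero p))
  right_inv := Quot.ind fun p =>
    (lensMap_eq hn _ (phase_untwist n p).symm).trans (congrArg _ (twist_untwist n p))
  continuous_toFun := continuous_lensMap hn
  continuous_invFun := continuous_quot_lift _ (continuous_untwist n)

end LensSpace

end

/-- **Surgery on the unknot and lens spaces.**
For each nonzero integer `n`, the map `i_n : S³ \ L → (S³ \ L)/ℤ_{|n|}`,
`(u,v) ↦ (v/|v|)^{-1/n} · (u, |v|)`, is a well-defined homeomorphism with inverse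
induced by `(u,v) ↦ (u v⁻¹ |v|, v^{-n} |v|^{n+1})`: there is a homeomorphism `h`
such that `h p` is the class of `(w u, w |v|)` for any `w` with `w^n = (v/|v|)⁻¹`,
and `h⁻¹` of the class of `(u,v)` is `(u v⁻¹ |v|, v^{-n} |v|^{n+1})`. -/
theorem lens_space_homeomorph (n : ℤ) (hn : n ≠ 0) :
    ∃ h : SphereMinusL ≃ₜ Quot (orbitRel n),
      (∀ p : SphereMinusL, ∀ w : ℂ,
        w ^ n = ((p.1.2 / (‖p.1.2‖ : ℂ)))⁻¹ →
        ∃ q : SphereMinusL, h p = Quot.mk (orbitRel n) q ∧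
          (q.1 : ℂ × ℂ) = (w * p.1.1, w * (‖p.1.2‖ : ℂ))) ∧
      (∀ p : SphereMinusL,
        ((h.symm (Quot.mk (orbitRel n) p)).1 : ℂ × ℂ) =
          (p.1.1 * p.1.2⁻¹ * (‖p.1.2‖ : ℂ),
           p.1.2 ^ (-n) * (‖p.1.2‖ : ℂ) ^ (n + 1))) := by
  refine ⟨LensSpace.lensHomeomorph hn, fun p w hw => ⟨_, LensSpace.lensMap_eq hn p hw, rfl⟩,
    fun p => rfl⟩
end
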